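/- Let n ≥ 2 be an integer, let k, ℓ ∈ ℤⁿ be linearly independent integer vectors, and let α, M, K > 0 and 𝕮 ≥ 1 be real numbers. Then the Lebesgue measure of the set {w ∈ ℝⁿ : |w| < M, |w·k| < α/𝕮, |π_k^⊥w·ℓ| ≤ 3αK^{n+3}/|k|} is at most 3·2ⁿ·M^{n−2}·α²·K^{n+3}/|k|. -/

import Mathlib

open MeasureTheory Set ENNReal Metric
open scoped RealInnerProductSpace

noncomputable section

/-- The cast of an integer vector to Euclidean space `ℝⁿ`. -/
def castZ {n : ℕ} (k : Fin n → ℤ) : EuclideanSpace ℝ (Fin n) := WithLp.toLp 2 (fun i => (k i : ℝ))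

/-- `projPerp k w = π_k^⊥ w`, the orthogonal projection of `w` onto the orthogonal
complement of `k`. -/
def projPerp {n : ℕ} (k w : EuclideanSpace ℝ (Fin n)) : EuclideanSpace ℝ (Fin n) :=
  w - (⟪w, k⟫ / ‖k‖ ^ 2) • k

/-- The ℓ¹-norm `|k|₁ = Σᵢ |kᵢ|` of an integer vector. -/
def normOneZ {n : ℕ} (k : Fin n → ℤ) : ℝ := ∑ i, |(k i : ℝ)|

/-- `k ∈ 𝒢ⁿ`: the components of `k` have gcd 1 and the first nonzero component of `k`
is strictly positive. -/
def Gn {n : ℕ} (k : Fin n → ℤ) : Prop :=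
  Finset.univ.gcd k = 1 ∧ ∃ i, 0 < k i ∧ ∀ j, j < i → k j = 0

/-- `k ∈ 𝒢ⁿ_K`. -/
def GnK {n : ℕ} (K : ℝ) (k : Fin n → ℤ) : Prop := Gn k ∧ normOneZ k ≤ K

/-- `l ∈ ℤk`, i.e. `l` is an integer multiple of `k`. -/
def inZk {n : ℕ} (k l : Fin n → ℤ) : Prop := ∃ m : ℤ, l = m • k

/-! With `p = π_k^⊥ ℓ` one has `π_k^⊥ w · ℓ = w · p` and `p ⊥ k`. In an orthonormal basis
starting with `k/|k|, p/|p|` the set therefore lies in a box with sides `2α/|k|`,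
`6αK^(n+3)/(|k||p|)` and `2M` in the remaining `n - 2` directions. The Gram determinant
`|k|²|p|² = |k|²|ℓ|² - (k·ℓ)²` of the integer vectors `k, ℓ` is a positive integer, so
`|k||p| ≥ 1`, and the volume of the box is at most `12 α² K^(n+3) (2M)^(n-2) / |k|`. -/

theorem EuclideanSpace.volume_setOf_abs_le {ι : Type*} [Fintype ι] (c : ι → ℝ) :
    volume {x : EuclideanSpace ℝ ι | ∀ i, |x i| ≤ c i} = ∏ i, ENNReal.ofReal (2 * c i) := by
  have hbox : {x : EuclideanSpace ℝ ι | ∀ i, |x i| ≤ c i} =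
      (MeasurableEquiv.toLp 2 (ι → ℝ)).symm ⁻¹' Set.univ.pi fun i => Icc (-c i) (c i) := by
    ext x
    simp only [mem_ofPred_eq, mem_preimage, mem_univ_pi, mem_Icc, abs_le,
      MeasurableEquiv.coe_toLp_symm]
  rw [hbox, (EuclideanSpace.volume_preserving_symm_measurableEquiv_toLp ι).measure_preimage
    (MeasurableSet.univ_pi fun _ => measurableSet_Icc).nullMeasurableSet, volume_pi_pi]
  simp only [Real.volume_Icc, sub_neg_eq_add, two_mul]

section InnerProductSpace

variable {E : Type*} [NormedAddCommGroup E] [InnerProductSpace ℝ E] [FiniteDimensional ℝ E]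

theorem exists_orthonormalBasis_extending_pair {m : ℕ} (hE : Module.finrank ℝ E = m + 2)
    {u v : E} (huv : Orthonormal ℝ ![u, v]) :
    ∃ b : OrthonormalBasis (Fin (m + 2)) ℝ E, b 0 = u ∧ b 1 = v := by
  set f : Fin (m + 2) → E := Fin.cons u (Fin.cons v 0)
  have hf : Orthonormal ℝ (({0, 1} : Set (Fin (m + 2))).domRestrict f) := by
    have hu : ‖u‖ = 1 := by simpa using huv.1 0
    have hv : ‖v‖ = 1 := by simpa using huv.1 1
    have huv₀ : ⟪u, v⟫ = 0 := by simpa using huv.2 (show (0 : Fin 2) ≠ 1 by decide)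
    have hvu₀ : ⟪v, u⟫ = 0 := by rw [real_inner_comm, huv₀]
    rw [orthonormal_iff_ite]
    rintro ⟨i, hi⟩ ⟨j, hj⟩
    simp only [Set.mem_insert_iff, Set.mem_singleton_iff] at hi hj
    rcases hi with rfl | rfl <;> rcases hj with rfl | rfl <;>
      simp [f, hu, hv, huv₀, hvu₀]
  obtain ⟨b, hb⟩ := hf.exists_orthonormalBasis_extension_of_card_eq (by simpa using hE)
  exact ⟨b, hb 0 (by simp), hb 1 (by simp)⟩

variable [MeasurableSpace E] [BorelSpace E]

theorem OrthonormalBasis.volume_norm_le_abs_inner_le {m : ℕ}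
    (b : OrthonormalBasis (Fin (m + 2)) ℝ E) {R r₀ r₁ : ℝ} (hR : 0 ≤ R) (hr₀ : 0 ≤ r₀)
    (hr₁ : 0 ≤ r₁) :
    volume {w : E | ‖w‖ ≤ R ∧ |⟪b 0, w⟫| ≤ r₀ ∧ |⟪b 1, w⟫| ≤ r₁} ≤
      ENNReal.ofReal (2 * r₀ * (2 * r₁) * (2 * R) ^ m) := by
  set c : Fin (m + 2) → ℝ := Fin.cons r₀ (Fin.cons r₁ fun _ => R)
  have hsub : {w : E | ‖w‖ ≤ R ∧ |⟪b 0, w⟫| ≤ r₀ ∧ |⟪b 1, w⟫| ≤ r₁} ⊆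
      b.repr ⁻¹' {x | ∀ i, |x i| ≤ c i} := by
    rintro w ⟨hw, hw₀, hw₁⟩ i
    simp only [b.repr_apply_apply]
    refine Fin.cases hw₀ (Fin.cases hw₁ fun i => ?_) i
    calc |⟪b i.succ.succ, w⟫| ≤ ‖b i.succ.succ‖ * ‖w‖ := abs_real_inner_le_norm _ _
      _ ≤ R := by simpa [b.orthonormal.1] using hw
  calc _ ≤ volume (b.repr ⁻¹' {x | ∀ i, |x i| ≤ c i}) := measure_mono hsub
    _ = ∏ i, ENNReal.ofReal (2 * c i) := by
      rw [b.measurePreserving_repr.measure_preimage (by measurability),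
        EuclideanSpace.volume_setOf_abs_le]
    _ = _ := by
      simp [Fin.prod_univ_succ, c, ENNReal.ofReal_mul, ENNReal.ofReal_pow, hr₀, hr₁, hR, mul_assoc]

theorem volume_norm_le_abs_inner_le_of_inner_eq_zero {x y : E} (hx : x ≠ 0) (hy : y ≠ 0)
    (hxy : ⟪x, y⟫ = 0) {R a b : ℝ} (hR : 0 ≤ R) (ha : 0 ≤ a) (hb : 0 ≤ b) :
    volume {w : E | ‖w‖ ≤ R ∧ |⟪w, x⟫| ≤ a ∧ |⟪w, y⟫| ≤ b} ≤
      ENNReal.ofReal (2 * (a / ‖x‖) * (2 * (b / ‖y‖)) * (2 * R) ^ (Module.finrank ℝ E - 2)) := by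
  set u := ‖x‖⁻¹ • x
  set v := ‖y‖⁻¹ • y
  have huv : Orthonormal ℝ ![u, v] := by
    have hu : ‖u‖ = 1 := norm_smul_inv_norm hx
    have hv : ‖v‖ = 1 := norm_smul_inv_norm hy
    have huv₀ : ⟪u, v⟫ = 0 := by
      simp only [u, v, real_inner_smul_left, real_inner_smul_right, hxy, mul_zero]
    refine ⟨Fin.forall_fin_two.mpr ⟨hu, hv⟩, fun i j hij => ?_⟩
    fin_cases i <;> fin_cases j <;> simp_all [real_inner_comm u v]
  have h2 : 2 ≤ Module.finrank ℝ E := by simpa using huv.linearIndependent.fintype_card_le_finrank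
  obtain ⟨m, hm⟩ : ∃ m, Module.finrank ℝ E = m + 2 := ⟨_, (Nat.sub_add_cancel h2).symm⟩
  obtain ⟨b, hb₀, hb₁⟩ := exists_orthonormalBasis_extending_pair hm huv
  rw [hm, Nat.add_sub_cancel]
  refine (measure_mono ?_).trans
    (b.volume_norm_le_abs_inner_le hR (by positivity) (by positivity))
  rintro w ⟨hw, hwx, hwy⟩
  refine ⟨hw, ?_, ?_⟩
  · rw [hb₀, real_inner_smul_left, real_inner_comm, abs_mul, abs_inv, abs_norm, inv_mul_eq_div]
    gcongr
  · rw [hb₁, real_inner_smul_left, real_inner_comm, abs_mul, abs_inv, abs_norm, inv_mul_eq_div]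
    gcongr

end InnerProductSpace

section Projection

variable {n : ℕ}

theorem inner_projPerp_left (k w l : EuclideanSpace ℝ (Fin n)) :
    ⟪projPerp k w, l⟫ = ⟪w, projPerp k l⟫ := by
  simp only [projPerp, inner_sub_left, inner_sub_right, real_inner_smul_left,
    real_inner_smul_right, real_inner_comm k l]
  ring

theorem inner_projPerp_eq_zero (k w : EuclideanSpace ℝ (Fin n)) : ⟪k, projPerp k w⟫ = 0 := by
  rcases eq_or_ne k 0 with rfl | hk
  · simp
  rw [projPerp, inner_sub_right, real_inner_smul_right, real_inner_self_eq_norm_sq,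
    real_inner_comm, div_mul_cancel₀ _ (by positivity), sub_self]

theorem norm_sq_mul_norm_projPerp_sq (k l : EuclideanSpace ℝ (Fin n)) :
    ‖k‖ ^ 2 * ‖projPerp k l‖ ^ 2 = ‖k‖ ^ 2 * ‖l‖ ^ 2 - ⟪k, l⟫ ^ 2 := by
  rcases eq_or_ne k 0 with rfl | hk
  · simp
  rw [← real_inner_self_eq_norm_sq (projPerp k l), projPerp, inner_sub_left, inner_sub_right,
    inner_sub_right, real_inner_smul_left, real_inner_smul_right, real_inner_smul_left,
    real_inner_smul_right, real_inner_self_eq_norm_sq, real_inner_self_eq_norm_sq,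
    real_inner_comm k l]
  field_simp
  ring

theorem projPerp_ne_zero {k l : EuclideanSpace ℝ (Fin n)} (h : LinearIndependent ℝ ![k, l]) :
    projPerp k l ≠ 0 := by
  intro h0
  exact one_ne_zero (LinearIndependent.pair_iff.mp h (-(⟪l, k⟫ / ‖k‖ ^ 2)) 1
    (by rw [neg_smul, one_smul, neg_add_eq_sub, ← projPerp, h0])).2

end Projection

theorem inner_castZ {n : ℕ} (k l : Fin n → ℤ) :
    ⟪castZ k, castZ l⟫ = ((∑ i, k i * l i : ℤ) : ℝ) := by
  simp [castZ, PiLp.inner_apply, mul_comm]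

theorem one_le_norm_mul_norm_projPerp_castZ {n : ℕ} {k l : Fin n → ℤ}
    (h : LinearIndependent ℝ ![castZ k, castZ l]) :
    1 ≤ ‖castZ k‖ * ‖projPerp (castZ k) (castZ l)‖ := by
  obtain ⟨G, hG⟩ : ∃ G : ℤ, (G : ℝ) = (‖castZ k‖ * ‖projPerp (castZ k) (castZ l)‖) ^ 2 :=
    ⟨(∑ i, k i * k i) * (∑ i, l i * l i) - (∑ i, k i * l i) ^ 2, by
      rw [mul_pow, norm_sq_mul_norm_projPerp_sq, ← real_inner_self_eq_norm_sq,
        ← real_inner_self_eq_norm_sq, inner_castZ, inner_castZ, inner_castZ]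
      push_cast
      rfl⟩
  have hGpos : (0 : ℝ) < G := by
    have hk : castZ k ≠ 0 := by simpa using h.ne_zero 0
    have hp := projPerp_ne_zero h
    rw [hG]
    positivity
  have hG1 : (1 : ℝ) ≤ G := Int.cast_one_le_of_pos (by exact_mod_cast hGpos)
  exact (one_le_sq_iff₀ (by positivity)).mp (hG ▸ hG1)

/-- For linearly independent integer vectors `k, ℓ ∈ ℤⁿ` (`n ≥ 2`) and reals
`α, M, K > 0`, `𝕮 ≥ 1`, the Lebesgue measure of
`{w ∈ ℝⁿ : |w| < M, |w·k| < α/𝕮, |π_k^⊥ w · ℓ| ≤ 3αK^(n+3)/|k|}` is at most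
`3·2ⁿ·M^(n-2)·α²·K^(n+3)/|k|`. -/
theorem measure_Omega2_le (n : ℕ) (hn : 2 ≤ n) (k l : Fin n → ℤ)
    (hkl : LinearIndependent ℝ ![castZ k, castZ l])
    (α M K C : ℝ) (hα : 0 < α) (hM : 0 < M) (hK : 0 < K) (hC : 1 ≤ C) :
    volume {w : EuclideanSpace ℝ (Fin n) |
        ‖w‖ < M ∧ |⟪w, castZ k⟫| < α / C ∧
        |⟪projPerp (castZ k) w, castZ l⟫| ≤ 3 * α * K ^ (n + 3) / ‖castZ k‖} ≤
      ENNReal.ofReal (3 * 2 ^ n * M ^ (n - 2) * α ^ 2 * K ^ (n + 3) / ‖castZ k‖) := by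
  set p := projPerp (castZ k) (castZ l)
  set B := 3 * α * K ^ (n + 3) / ‖castZ k‖
  have hk : castZ k ≠ 0 := by simpa using hkl.ne_zero 0
  have hkp : 1 ≤ ‖castZ k‖ * ‖p‖ := one_le_norm_mul_norm_projPerp_castZ hkl
  calc _ ≤ volume {w : EuclideanSpace ℝ (Fin n) |
        ‖w‖ ≤ M ∧ |⟪w, castZ k⟫| ≤ α ∧ |⟪w, p⟫| ≤ B} := by
        refine measure_mono fun w ⟨hw, hwk, hwl⟩ => ⟨hw.le, ?_, ?_⟩
        · exact hwk.le.trans (div_le_self hα.le hC)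
        · rwa [← inner_projPerp_left]
    _ ≤ ENNReal.ofReal (2 * (α / ‖castZ k‖) * (2 * (B / ‖p‖)) * (2 * M) ^ (n - 2)) := by
        simpa only [finrank_euclideanSpace_fin] using
          volume_norm_le_abs_inner_le_of_inner_eq_zero hk (projPerp_ne_zero hkl)
          (inner_projPerp_eq_zero _ _) hM.le hα.le (by positivity)
    _ ≤ _ := by
        refine ENNReal.ofReal_le_ofReal ?_
        obtain ⟨m, rfl⟩ := Nat.exists_eq_add_of_le' hn
        calc _ = 12 * α ^ 2 * K ^ (m + 2 + 3) * (2 * M) ^ m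
              / (‖castZ k‖ * (‖castZ k‖ * ‖p‖)) := by
              simp only [B, Nat.add_sub_cancel]
              field_simp
              ring
          _ ≤ 12 * α ^ 2 * K ^ (m + 2 + 3) * (2 * M) ^ m / (‖castZ k‖ * 1) := by gcongr
          _ = _ := by
              rw [Nat.add_sub_cancel, mul_one, mul_pow]
              ring
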